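/- arXiv:1506.01749 — 5 statements merged into one kernel-verified Lean document; each statement's English description precedes it below -/
import Mathlib

section
/- Every connected finite graph with b > 0 branches has max leaf number at most 2b. -/
open SimpleGraph

variable {V : Type*}

/-- A walk is *branch-like* if it is a path or a cycle and every internal vertex
(vertex other than the endpoints) has degree two in `G`. -/
def IsBranchLike (G : SimpleGraph V) {u v : V} (W : G.Walk u v) : Prop :=
  (W.IsPath ∨ ∃ h : v = u, (W.copy rfl h).IsCycle) ∧
  ∀ x ∈ W.support, x ≠ u → x ≠ v → (G.neighborSet x).ncard = 2

/-- A *branch* of `G` is a maximal branch-like walk (maximal with respect to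
containment of edges). -/
def IsBranch (G : SimpleGraph V) {u v : V} (W : G.Walk u v) : Prop :=
  IsBranchLike G W ∧
  ∀ (u' v' : V) (W' : G.Walk u' v'), IsBranchLike G W' →
    (∀ e ∈ W.edges, e ∈ W'.edges) → (∀ e ∈ W'.edges, e ∈ W.edges)

/-- The branches of `G`, identified by their edge sets. -/
def branchSet (G : SimpleGraph V) : Set (Set (Sym2 V)) :=
  {E | ∃ (u v : V) (W : G.Walk u v), IsBranch G W ∧ E = {e | e ∈ W.edges}}

/-- The number of branches of `G`. -/
noncomputable def branchCount (G : SimpleGraph V) : ℕ := (branchSet G).ncard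

/-- The number of leaves (degree-one vertices) of a graph. -/
noncomputable def leafCount (T : SimpleGraph V) : ℕ :=
  {v : V | (T.neighborSet v).ncard = 1}.ncard

/-- The max leaf number of `G`: the maximum number of leaves over all spanning
trees of `G`. -/
noncomputable def maxLeafNumber (G : SimpleGraph V) : ℕ :=
  sSup {k | ∃ T : SimpleGraph V, T ≤ G ∧ T.IsTree ∧ k = leafCount T}

/-- The indistinct set for a vertex `s` and two branches `A`, `B`: pairs of
distinct vertices, one from each branch, that `s` fails to distinguish. -/
def indistinctSet (G : SimpleGraph V) (s : V) {a₁ a₂ b₁ b₂ : V}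
    (A : G.Walk a₁ a₂) (B : G.Walk b₁ b₂) : Set (V × V) :=
  {p : V × V | p.1 ∈ A.support ∧ p.2 ∈ B.support ∧ p.1 ≠ p.2 ∧
    G.dist s p.1 = G.dist s p.2}

/-- A locating set for `G`. -/
def IsLocatingSet (G : SimpleGraph V) (S : Set V) : Prop :=
  ∀ u v : V, u ≠ v → ∃ w ∈ S, G.dist u w ≠ G.dist v w

/-- The metric dimension of `G`: minimum cardinality of a locating set. -/
noncomputable def metricDim (G : SimpleGraph V) : ℕ :=
  sInf {k | ∃ S : Set V, IsLocatingSet G S ∧ S.ncard = k}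

/-! A tree has at most `2 + ∑ v, (deg v - 2)` leaves (truncated subtraction, i.e. positive parts),
and passing from a spanning tree to `G` only increases this bound. If `G` has maximum degree at
most two the bound is `2 ≤ 2b`. Otherwise it is at most `∑_{deg_G v ≠ 2} deg_G v`, the number of
darts leaving a vertex of degree `≠ 2`. Sending each such dart to a branch through its edge puts at
most two darts on each branch, since a branch meets vertices of degree `≠ 2` only at its ends. -/

open Finset

variable {G : SimpleGraph V}

lemma SimpleGraph.ncard_neighborSet_eq_degree (G : SimpleGraph V) [Fintype V] [DecidableRel G.Adj]
    (v : V) : (G.neighborSet v).ncard = G.degree v := by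
  rw [Set.ncard_eq_toFinset_card', Set.toFinset_card, card_neighborSet_eq_degree]

lemma leafCount_eq_card_filter [Fintype V] [DecidableRel G.Adj] :
    leafCount G = #{v | G.degree v = 1} := by
  simp only [leafCount, ncard_neighborSet_eq_degree, ← Set.ncard_coe_finset, coe_filter,
    mem_univ, true_and]

lemma SimpleGraph.IsTree.leafCount_le [Fintype V] [DecidableRel G.Adj] (hG : G.IsTree) :
    leafCount G ≤ 2 + ∑ v, (G.degree v - 2) := by
  have hdeg : ∑ v, G.degree v + 2 = 2 * Fintype.card V := by
    rw [sum_degrees_eq_twice_card_edges, ← hG.card_edgeFinset]; ring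
  have hpointwise : ∀ v, (if G.degree v = 1 then 1 else 0) + G.degree v ≤ 2 + (G.degree v - 2) :=
    fun v => by split_ifs <;> omega
  have := sum_le_sum fun v (_ : v ∈ univ) => hpointwise v
  rw [sum_add_distrib, sum_add_distrib, ← card_filter, ← leafCount_eq_card_filter] at this
  simp only [sum_const, card_univ, smul_eq_mul] at this
  omega

lemma SimpleGraph.two_add_sum_degree_sub_two_le [Fintype V] [DecidableRel G.Adj]
    (h : ∃ v, 3 ≤ G.degree v) :
    2 + ∑ v, (G.degree v - 2) ≤ ∑ v with G.degree v ≠ 2, G.degree v := by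
  classical
  obtain ⟨v₀, hv₀⟩ := h
  calc 2 + ∑ v, (G.degree v - 2) = ∑ v, ((G.degree v - 2) + if v = v₀ then 2 else 0) := by
        rw [sum_add_distrib, sum_ite_eq' univ v₀, if_pos (mem_univ _), add_comm]
    _ ≤ ∑ v, if G.degree v = 2 then 0 else G.degree v :=
        sum_le_sum fun v _ => by split_ifs <;> subst_vars <;> omega
    _ = ∑ v with G.degree v ≠ 2, G.degree v := by rw [sum_filter]; simp only [ite_not]

lemma SimpleGraph.IsTree.leafCount_le_of_le [Fintype V] [DecidableRel G.Adj] {T : SimpleGraph V}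
    [DecidableRel T.Adj] (hT : T.IsTree) (hTG : T ≤ G) :
    leafCount T ≤ 2 + ∑ v, (G.degree v - 2) :=
  hT.leafCount_le.trans <| by gcongr with v; exact degree_le_of_le hTG

section Branch

variable {u v : V} {W : G.Walk u v}

lemma SimpleGraph.Walk.IsPath.penultimate_of_toSubgraph_adj (hW : W.IsPath) {y : V}
    (h : W.toSubgraph.Adj v y) : W.penultimate = y := by
  rw [← W.snd_reverse]
  exact hW.reverse.snd_of_toSubgraph_adj (by rwa [Walk.toSubgraph_reverse])

lemma IsBranchLike.eq_or_eq_of_degree_ne_two [Fintype V] [DecidableRel G.Adj]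
    (hW : IsBranchLike G W) {x : V} (hx : x ∈ W.support) (hdeg : G.degree x ≠ 2) :
    x = u ∨ x = v := by
  by_contra! h
  exact hdeg (G.ncard_neighborSet_eq_degree x ▸ hW.2 x hx h.1 h.2)

lemma IsBranchLike.exists_ends [Fintype V] [DecidableRel G.Adj] (hW : IsBranchLike G W) :
    ∃ a b : V × V, ∀ x y, W.toSubgraph.Adj x y → G.degree x ≠ 2 → (x, y) = a ∨ (x, y) = b := by
  have hend {x y : V} (hxy : W.toSubgraph.Adj x y) (hx : G.degree x ≠ 2) : x = u ∨ x = v :=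
    hW.eq_or_eq_of_degree_ne_two (W.mem_verts_toSubgraph.1 hxy.fst_mem) hx
  rcases hW.1 with hpath | ⟨rfl, hcyc⟩
  · refine ⟨(u, W.snd), (v, W.penultimate), fun x y hxy hx => ?_⟩
    rcases hend hxy hx with rfl | rfl
    · exact .inl (by rw [hpath.snd_of_toSubgraph_adj hxy])
    · exact .inr (by rw [hpath.penultimate_of_toSubgraph_adj hxy])
  · rw [Walk.copy_rfl_rfl] at hcyc
    refine ⟨(v, W.snd), (v, W.penultimate), fun x y hxy hx => ?_⟩
    obtain rfl : x = v := (hend hxy hx).elim id id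
    have hy : y ∈ W.toSubgraph.neighborSet x := hxy
    rw [hcyc.neighborSet_toSubgraph_endpoint] at hy
    simpa using hy

lemma IsBranchLike.card_darts_le_two [Fintype V] [DecidableEq V] [DecidableRel G.Adj]
    (hW : IsBranchLike G W) : #{d : G.Dart | d.edge ∈ W.edges ∧ G.degree d.fst ≠ 2} ≤ 2 := by
  obtain ⟨a, b, hab⟩ := hW.exists_ends
  refine (card_le_card_of_injOn Dart.toProd (t := {a, b}) (fun d hd => ?_)
    Dart.toProd_injective.injOn).trans card_le_two
  simp only [coe_filter, Set.mem_ofPred_eq, mem_univ, true_and] at hd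
  simpa using hab d.fst d.snd (Walk.adj_toSubgraph_iff_mem_edges.2 hd.1) hd.2

lemma IsBranchLike.exists_isBranch [Finite V] (hW : IsBranchLike G W) :
    ∃ (u' v' : V) (W' : G.Walk u' v'), IsBranch G W' ∧ ∀ e ∈ W.edges, e ∈ W'.edges := by
  let S : Set (Set (Sym2 V)) := {E | ∃ (u' v' : V) (W' : G.Walk u' v'),
    IsBranchLike G W' ∧ (∀ e ∈ W.edges, e ∈ W'.edges) ∧ E = {e | e ∈ W'.edges}}
  obtain ⟨_, ⟨u', v', W', hW', hWW', rfl⟩, hmax⟩ :=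
    S.toFinite.exists_maximal ⟨_, u, v, W, hW, fun _ h => h, rfl⟩
  exact ⟨u', v', W', ⟨hW', fun a b W'' hW'' hsub =>
    hmax ⟨a, b, W'', hW'', fun e he => hsub e (hWW' e he), rfl⟩ hsub⟩, hWW'⟩

lemma exists_mem_branchSet_of_adj [Finite V] {a b : V} (h : G.Adj a b) :
    ∃ B ∈ branchSet G, s(a, b) ∈ B := by
  have hpath : IsBranchLike G h.toWalk :=
    ⟨.inl h.isPath_toWalk, fun x hx hxa hxb => by simp_all [Adj.toWalk]⟩
  obtain ⟨u, v, W, hW, hsub⟩ := hpath.exists_isBranch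
  exact ⟨_, ⟨u, v, W, hW, rfl⟩, hsub _ (by simp [Adj.toWalk])⟩

lemma sum_degree_ne_two_le_two_mul_branchCount [Fintype V] [DecidableRel G.Adj] :
    ∑ v with G.degree v ≠ 2, G.degree v ≤ 2 * branchCount G := by
  classical
  choose β hβ hdβ using fun d : G.Dart => exists_mem_branchSet_of_adj d.adj
  let D : Finset G.Dart := {d | G.degree d.fst ≠ 2}
  have hfiber : ∀ B ∈ D.image β, #{d ∈ D | β d = B} ≤ 2 := by
    intro B hB
    obtain ⟨d₀, -, rfl⟩ := mem_image.1 hB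
    obtain ⟨u, v, W, hW, hWβ⟩ := hβ d₀
    refine (card_le_card fun d hd => ?_).trans hW.1.card_darts_le_two
    simp only [D, mem_filter, mem_univ, true_and] at hd ⊢
    have hdW := hdβ d
    rw [hd.2, hWβ] at hdW
    exact ⟨hdW, hd.1⟩
  calc ∑ v with G.degree v ≠ 2, G.degree v
      = ∑ v with G.degree v ≠ 2, #{d ∈ D | d.fst = v} := by
        refine sum_congr rfl fun v hv => ?_
        rw [← dart_fst_fiber_card_eq_degree, filter_filter]
        exact congrArg card (filter_congr fun d _ => by grind)
    _ = #D := (card_eq_sum_card_fiberwise fun d hd => by simpa [D] using hd).symm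
    _ ≤ 2 * #(D.image β) := card_le_mul_card_image D 2 hfiber
    _ ≤ 2 * branchCount G := by
        rw [branchCount, ← Set.ncard_coe_finset]
        gcongr
        · exact Set.toFinite _
        · simpa [Set.subset_def] using fun d _ => hβ d

end Branch

theorem maxLeaf_upper_bound_by_branches_general (V : Type) [Fintype V]
    (G : SimpleGraph V) (hb : 0 < branchCount G) :
    maxLeafNumber G ≤ 2 * branchCount G := by
  classical
  refine csSup_le' ?_
  rintro _ ⟨T, hTG, hT, rfl⟩
  refine (hT.leafCount_le_of_le hTG).trans ?_
  by_cases h : ∃ v, 3 ≤ G.degree v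
  · exact (two_add_sum_degree_sub_two_le h).trans sum_degree_ne_two_le_two_mul_branchCount
  · push Not at h
    have : ∑ v, (G.degree v - 2) = 0 := sum_eq_zero fun v _ => by have := h v; omega
    omega

/-- Every connected finite graph with `b > 0` branches has max leaf number at
most `2 * b`. -/
theorem maxLeaf_upper_bound_by_branches (V : Type) [Fintype V]
    (G : SimpleGraph V) (hG : G.Connected) (hb : 0 < branchCount G) :
    maxLeafNumber G ≤ 2 * branchCount G :=
  maxLeaf_upper_bound_by_branches_general V G hb
end

section
/- Let G be a connected finite graph, let B be a branch of G, and let s be any vertex of G. Then the vertex sequence of B may be partitioned into at most three contiguous subpaths, on each of which the shortest-path distance from s in G is monotonic (non-decreasing or non-increasing along the subpath). -/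
/-!
Write `f k` for the distance from `s` to the `k`-th vertex of the branch `W` of length `L`.
An interior vertex other than `s` has only its two neighbours on `W`, and one of them is closer
to `s`; so `f` has no interior local minimum away from `s`, i.e. it first increases and then
decreases. If `s` is not an interior vertex this already gives the pieces. If `s` is the
interior vertex `W_t`, the same holds on `[0, t]` and on `[t, L]`, which would give four pieces.
But a shortest walk from `s` to an end of `W` must leave the interior of `W` through `u` or `v`,
and this forces `d(s, u) = t` or `d(s, v) = L - t` (otherwise both walks leave through the far
end, giving `d(s, u) + d(s, v) ≥ L`): then `f` drops at unit rate on `[0, t]`, or grows at unit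
rate on `[t, L]`, and three pieces suffice.
-/

open SimpleGraph

variable {V : Type*}

section Unimodal

variable {α : Type*} [LinearOrder α] {f : ℕ → α} {a b : ℕ}

theorem exists_monotoneOn_antitoneOn_Icc (hab : a ≤ b)
    (hf : ∀ k, a ≤ k → k + 2 ≤ b → f (k + 1) ≤ f k → f (k + 2) ≤ f (k + 1)) :
    ∃ m, a ≤ m ∧ m ≤ b ∧ MonotoneOn f (Set.Icc a m) ∧ AntitoneOn f (Set.Icc m b) := by
  classical
  have hP : ∃ k, a ≤ k ∧ (b ≤ k ∨ f (k + 1) ≤ f k) := ⟨b, hab, .inl le_rfl⟩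
  set m := Nat.find hP
  obtain ⟨ham, hm⟩ : a ≤ m ∧ (b ≤ m ∨ f (m + 1) ≤ f m) := Nat.find_spec hP
  have hmb : m ≤ b := Nat.find_min' hP ⟨hab, .inl le_rfl⟩
  refine ⟨m, ham, hmb, ?_, ?_⟩
  · refine monotoneOn_of_le_add_one Set.ordConnected_Icc fun k _ hk hk1 => ?_
    have := Nat.find_min hP (show k < m by grind)
    push Not at this
    exact (this hk.1).2.le
  · have hstep : ∀ k, m ≤ k → k < b → f (k + 1) ≤ f k := by
      intro k hmk hkb
      induction k, hmk using Nat.le_induction with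
      | base => exact hm.resolve_left (by omega)
      | succ k hmk ih => exact hf k (by omega) (by omega) (ih (by omega))
    exact antitoneOn_of_add_one_le Set.ordConnected_Icc
      fun k _ hk hk1 => hstep k hk.1 (by grind)

end Unimodal

section NatLipschitz

variable {f : ℕ → ℕ} {a b : ℕ}

theorem antitoneOn_Icc_of_eq_add_sub (hf : ∀ j k, j ≤ k → f j ≤ f k + (k - j))
    (h : f a = f b + (b - a)) : AntitoneOn f (Set.Icc a b) := by
  intro j hj k hk hjk
  have := hf a j hj.1
  have := hf k b hk.2
  simp only [Set.mem_Icc] at hj hk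
  omega

theorem monotoneOn_Icc_of_eq_add_sub (hf : ∀ j k, j ≤ k → f k ≤ f j + (k - j))
    (h : f b = f a + (b - a)) : MonotoneOn f (Set.Icc a b) := by
  intro j hj k hk hjk
  have := hf a j hj.1
  have := hf k b hk.2
  simp only [Set.mem_Icc] at hj hk
  omega

end NatLipschitz

namespace SimpleGraph

variable {G : SimpleGraph V} {u v : V}

theorem Walk.support_getD_eq_getVert (W : G.Walk u v) (d : V) {k : ℕ} (hk : k ≤ W.length) :
    W.support.getD k d = W.getVert k := by
  rw [List.getD_eq_getElem _ _ (by simp; omega), W.support_getElem_eq_getVert]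

theorem Walk.dist_getVert_le (W : G.Walk u v) {j k : ℕ} (hjk : j ≤ k) :
    G.dist (W.getVert j) (W.getVert k) ≤ k - j := by
  have h := dist_le ((W.drop j).take (k - j))
  rw [take_length, drop_getVert, Nat.add_sub_cancel' hjk] at h
  exact h.trans (min_le_left _ _)

theorem Connected.dist_getVert_le_add (hG : G.Connected) (s : V) (W : G.Walk u v) {j k : ℕ}
    (hjk : j ≤ k) :
    G.dist s (W.getVert j) ≤ G.dist s (W.getVert k) + (k - j) ∧
      G.dist s (W.getVert k) ≤ G.dist s (W.getVert j) + (k - j) := by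
  have hW := W.dist_getVert_le hjk
  constructor
  · grw [hG.dist_triangle (v := W.getVert k), dist_comm (u := W.getVert k), hW]
  · grw [hG.dist_triangle (v := W.getVert j), hW]

theorem Connected.exists_adj_dist_lt (hG : G.Connected) {s x : V} (hx : x ≠ s) :
    ∃ y, G.Adj x y ∧ G.dist s y < G.dist s x := by
  obtain ⟨p, hp⟩ := hG.exists_walk_length_eq_dist x s
  obtain ⟨y, hxy, q, rfl⟩ := p.exists_eq_cons_of_ne hx
  refine ⟨y, hxy, ?_⟩
  rw [dist_comm, dist_comm (u := s), ← hp, Walk.length_cons]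
  exact Nat.lt_succ_of_le (dist_le q)

theorem Walk.add_dist_le_length_or_add_dist_le_length {W : G.Walk u v}
    (hnbr : ∀ k, 0 < k → k < W.length →
      G.neighborSet (W.getVert k) = {W.getVert (k - 1), W.getVert (k + 1)})
    {z : V} (hz : ∀ k, 0 < k → k < W.length → W.getVert k ≠ z) {x : V} (P : G.Walk x z)
    {t : ℕ} (ht : t ≤ W.length) (hx : W.getVert t = x) :
    t + G.dist u z ≤ P.length ∨ W.length - t + G.dist v z ≤ P.length := by
  have hends : ∀ {x} (P : G.Walk x z) t, W.getVert t = x → t = 0 ∨ t = W.length →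
      t + G.dist u z ≤ P.length ∨ W.length - t + G.dist v z ≤ P.length := by
    rintro x P t rfl (rfl | rfl)
    · left; simpa using dist_le P
    · right; simpa using dist_le P
  induction P generalizing t with
  | nil =>
    by_cases hint : 0 < t ∧ t < W.length
    · exact absurd hx (hz t hint.1 hint.2)
    · exact hends _ t hx (by omega)
  | cons hadj Q ih =>
    by_cases hint : 0 < t ∧ t < W.length
    · subst hx
      have hy : _ ∈ G.neighborSet (W.getVert t) := hadj
      rw [hnbr t hint.1 hint.2] at hy
      rw [length_cons]
      rcases hy with hy | hy
      · rcases ih hz (t := t - 1) (by omega) hy.symm hends with h | h <;> [left; right] <;> omega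
      · rcases ih hz (t := t + 1) (by omega) hy.symm hends with h | h <;> [left; right] <;> omega
    · exact hends _ t hx (by omega)

end SimpleGraph

namespace IsBranchLike

variable {G : SimpleGraph V} {u v : V} {W : G.Walk u v}

theorem eq_of_getVert_eq (hW : IsBranchLike G W) {j k : ℕ} (hj : 0 < j) (hjL : j < W.length)
    (hk : k ≤ W.length) (h : W.getVert j = W.getVert k) : j = k := by
  rcases hW.1 with hP | ⟨rfl, hC⟩
  · exact hP.getVert_injOn (by simp; omega) (by simpa using hk) h
  · simp only [Walk.copy_rfl_rfl] at hC
    rcases k.eq_zero_or_pos with rfl | hk0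
    · have := (hC.getVert_endpoint_iff hjL.le).1 (by simpa using h)
      omega
    · exact hC.getVert_injOn (by simp; omega) (by simp; omega) h

theorem getVert_pred_ne_getVert_succ (hW : IsBranchLike G W) {k : ℕ} (hk : 0 < k)
    (hkL : k < W.length) : W.getVert (k - 1) ≠ W.getVert (k + 1) := by
  rcases hW.1 with hP | ⟨rfl, hC⟩
  · intro h
    have := hP.getVert_injOn (by simp; omega) (by simp; omega) h
    omega
  · simpa using hC.getVert_sub_one_ne_getVert_add_one hkL.le

theorem neighborSet_getVert (hW : IsBranchLike G W) {k : ℕ} (hk : 0 < k) (hkL : k < W.length) :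
    G.neighborSet (W.getVert k) = {W.getVert (k - 1), W.getVert (k + 1)} := by
  have hdeg := hW.2 _ (W.getVert_mem_support k)
    (by simpa using fun h => (hW.eq_of_getVert_eq hk hkL (Nat.zero_le _) h).not_gt hk)
    (by simpa using fun h => (hW.eq_of_getVert_eq hk hkL le_rfl h).not_lt hkL)
  have hpred : G.Adj (W.getVert k) (W.getVert (k - 1)) := by
    simpa [Nat.sub_add_cancel hk] using (W.adj_getVert_succ (i := k - 1) (by omega)).symm
  have hsub : {W.getVert (k - 1), W.getVert (k + 1)} ⊆ G.neighborSet (W.getVert k) := by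
    rintro y (rfl | rfl)
    exacts [hpred, W.adj_getVert_succ hkL]
  refine (Set.eq_of_subset_of_ncard_le hsub ?_ (Set.finite_of_ncard_pos (by omega))).symm
  rw [hdeg, Set.ncard_pair (hW.getVert_pred_ne_getVert_succ hk hkL)]

theorem dist_getVert_lt_or_dist_getVert_lt (hW : IsBranchLike G W) (hG : G.Connected) {s : V}
    {k : ℕ} (hk : k + 2 ≤ W.length) (hs : W.getVert (k + 1) ≠ s) :
    G.dist s (W.getVert k) < G.dist s (W.getVert (k + 1)) ∨
      G.dist s (W.getVert (k + 2)) < G.dist s (W.getVert (k + 1)) := by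
  obtain ⟨y, hadj, hy⟩ := hG.exists_adj_dist_lt hs
  have hy' : y ∈ G.neighborSet (W.getVert (k + 1)) := hadj
  rw [hW.neighborSet_getVert (by omega) (by omega), Nat.add_sub_cancel] at hy'
  rcases hy' with rfl | rfl
  exacts [.inl hy, .inr hy]

theorem dist_getVert_start_eq_or_dist_getVert_end_eq (hW : IsBranchLike G W) {t : ℕ}
    (ht : t ≤ W.length) :
    G.dist (W.getVert t) u = t ∨ G.dist (W.getVert t) v = W.length - t := by
  have hnbr := fun k (hk : 0 < k) (hkL : k < W.length) => hW.neighborSet_getVert hk hkL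
  have hu : ∀ k, 0 < k → k < W.length → W.getVert k ≠ u := fun k hk hkL h =>
    (hW.eq_of_getVert_eq hk hkL (Nat.zero_le _) (by simpa using h)).not_gt hk
  have hv : ∀ k, 0 < k → k < W.length → W.getVert k ≠ v := fun k hk hkL h =>
    (hW.eq_of_getVert_eq hk hkL le_rfl (by simpa using h)).not_lt hkL
  obtain ⟨p, hp⟩ := Reachable.exists_walk_length_eq_dist ⟨(W.take t).reverse⟩
  obtain ⟨q, hq⟩ := Reachable.exists_walk_length_eq_dist ⟨W.drop t⟩
  have hpu := Walk.add_dist_le_length_or_add_dist_le_length hnbr hu p ht rfl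
  have hqv := Walk.add_dist_le_length_or_add_dist_le_length hnbr hv q ht rfl
  have hut := W.dist_getVert_le (Nat.zero_le t)
  have htv := W.dist_getVert_le ht
  simp only [Walk.getVert_zero, Walk.getVert_length] at hut htv
  rw [dist_comm] at hut
  omega

theorem exists_dist_getVert_monotone_pieces (hW : IsBranchLike G W) (hG : G.Connected) (s : V) :
    ∃ i j : ℕ, i ≤ j ∧ j ≤ W.length ∧
      (MonotoneOn (fun k => G.dist s (W.getVert k)) (Set.Icc 0 i) ∨
        AntitoneOn (fun k => G.dist s (W.getVert k)) (Set.Icc 0 i)) ∧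
      (MonotoneOn (fun k => G.dist s (W.getVert k)) (Set.Icc i j) ∨
        AntitoneOn (fun k => G.dist s (W.getVert k)) (Set.Icc i j)) ∧
      (MonotoneOn (fun k => G.dist s (W.getVert k)) (Set.Icc j W.length) ∨
        AntitoneOn (fun k => G.dist s (W.getVert k)) (Set.Icc j W.length)) := by
  set f := fun k => G.dist s (W.getVert k)
  have hlip : ∀ j k, j ≤ k → f j ≤ f k + (k - j) ∧ f k ≤ f j + (k - j) :=
    fun j k hjk => hG.dist_getVert_le_add s W hjk
  have hvalley : ∀ k, k + 2 ≤ W.length → W.getVert (k + 1) ≠ s →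
      f (k + 1) ≤ f k → f (k + 2) ≤ f (k + 1) := fun k hk hs h =>
    ((hW.dist_getVert_lt_or_dist_getVert_lt hG hk hs).resolve_left h.not_gt).le
  by_cases hs : ∃ t, 0 < t ∧ t < W.length ∧ W.getVert t = s
  · obtain ⟨t, ht0, htL, rfl⟩ := hs
    have hne : ∀ k, k + 2 ≤ W.length → k + 1 ≠ t → W.getVert (k + 1) ≠ W.getVert t :=
      fun k hk hkt h => hkt (hW.eq_of_getVert_eq (by omega) (by omega) htL.le h)
    obtain ⟨m₁, -, hm₁, hmono₁, hanti₁⟩ := exists_monotoneOn_antitoneOn_Icc (Nat.zero_le t)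
      fun k _ hk => hvalley k (by omega) (hne k (by omega) (by omega))
    obtain ⟨m₂, hm₂, hm₂L, hmono₂, hanti₂⟩ := exists_monotoneOn_antitoneOn_Icc htL.le
      fun k hk hkL => hvalley k hkL (hne k hkL (by omega))
    rcases hW.dist_getVert_start_eq_or_dist_getVert_end_eq htL.le with hu | hv
    · refine ⟨t, m₂, hm₂, hm₂L, .inr ?_, .inl hmono₂, .inr hanti₂⟩
      exact antitoneOn_Icc_of_eq_add_sub (fun j k h => (hlip j k h).1) (by simp [f, hu])
    · refine ⟨m₁, t, hm₁, htL.le, .inl hmono₁, .inr hanti₁, .inl ?_⟩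
      exact monotoneOn_Icc_of_eq_add_sub (fun j k h => (hlip j k h).2) (by simp [f, hv])
  · push Not at hs
    obtain ⟨m, -, hm, hmono, hanti⟩ := exists_monotoneOn_antitoneOn_Icc (Nat.zero_le W.length)
      fun k _ hk => hvalley k hk (hs _ (by omega) (by omega))
    exact ⟨m, m, le_rfl, hm, .inl hmono, .inl (by simp), .inr hanti⟩

end IsBranchLike

theorem branch_distance_monotone_pieces_general (V : Type)
    (G : SimpleGraph V) (hG : G.Connected) (u v : V) (W : G.Walk u v)
    (hW : IsBranch G W) (s : V) :
    ∃ i j : ℕ, i ≤ j ∧ j ≤ W.length ∧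
      (MonotoneOn (fun k => G.dist s (W.support.getD k u)) (Set.Icc 0 i) ∨
        AntitoneOn (fun k => G.dist s (W.support.getD k u)) (Set.Icc 0 i)) ∧
      (MonotoneOn (fun k => G.dist s (W.support.getD k u)) (Set.Icc i j) ∨
        AntitoneOn (fun k => G.dist s (W.support.getD k u)) (Set.Icc i j)) ∧
      (MonotoneOn (fun k => G.dist s (W.support.getD k u)) (Set.Icc j W.length) ∨
        AntitoneOn (fun k => G.dist s (W.support.getD k u)) (Set.Icc j W.length)) := by
  obtain ⟨i, j, hij, hjL, h₁, h₂, h₃⟩ := hW.1.exists_dist_getVert_monotone_pieces hG s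
  have hcongr : ∀ a b, b ≤ W.length →
      Set.EqOn (fun k => G.dist s (W.getVert k)) (fun k => G.dist s (W.support.getD k u))
        (Set.Icc a b) := fun a b hb k hk => by
    simp only [W.support_getD_eq_getVert u (hk.2.trans hb)]
  exact ⟨i, j, hij, hjL,
    h₁.imp (·.congr (hcongr _ _ (hij.trans hjL))) (·.congr (hcongr _ _ (hij.trans hjL))),
    h₂.imp (·.congr (hcongr _ _ hjL)) (·.congr (hcongr _ _ hjL)),
    h₃.imp (·.congr (hcongr _ _ le_rfl)) (·.congr (hcongr _ _ le_rfl))⟩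

/-- Along any branch `B` of a connected finite graph `G`, the vertex sequence of
`B` can be partitioned into at most three contiguous subpaths on each of which
the shortest-path distance from any fixed vertex `s` is monotonic. -/
theorem branch_distance_monotone_pieces (V : Type) [Fintype V]
    (G : SimpleGraph V) (hG : G.Connected) (u v : V) (W : G.Walk u v)
    (hW : IsBranch G W) (s : V) :
    ∃ i j : ℕ, i ≤ j ∧ j ≤ W.length ∧
      (MonotoneOn (fun k => G.dist s (W.support.getD k u)) (Set.Icc 0 i) ∨
        AntitoneOn (fun k => G.dist s (W.support.getD k u)) (Set.Icc 0 i)) ∧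
      (MonotoneOn (fun k => G.dist s (W.support.getD k u)) (Set.Icc i j) ∨
        AntitoneOn (fun k => G.dist s (W.support.getD k u)) (Set.Icc i j)) ∧
      (MonotoneOn (fun k => G.dist s (W.support.getD k u)) (Set.Icc j W.length) ∨
        AntitoneOn (fun k => G.dist s (W.support.getD k u)) (Set.Icc j W.length)) :=
  branch_distance_monotone_pieces_general V G hG u v W hW s
end

section
/- Let G be a connected finite graph, let A and B be branches of G (possibly A = B), and let s be a vertex of G. Then the indistinct set for s, A, and B is contained in a union of at most nine sets, each of which, when a pair (a,b) is identified with the point (p_A(a), p_B(b)) where p_A and p_B denote positions of vertices along the branches A and B respectively, lies on a line of slope +1 or −1 (i.e., within each such set, p_A(a) + p_B(b) is constant, or p_A(a) − p_B(b) is constant). -/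
/-!
Along a branch `x 0, …, x n` a shortest walk from an inner vertex has to run along the branch
to one of its ends, because inner vertices have degree two. Hence the distance to `s` is
`min (i + d(x 0, s)) (n - i + d(x n, s))`, and when `s = x k` is itself inner it is given by the
same formula on each of the two sub-branches split at `k`. In that case one of the ends is
reached fastest through the branch, so one of the two sub-branches contributes a single line and
the distance has at most three pieces of slope `±1`. A pair at equal distance from `s` with its
vertices on given pieces of `A` and `B` then has `p_A(a) + p_B(b)` or `p_A(a) - p_B(b)` fixed,
giving `3 × 3` diagonals.
-/

open SimpleGraph

variable {V : Type*}

def IsPiecewiseUnitSlope (f : ℕ → ℤ) (I : Set ℕ) (k : ℕ) : Prop :=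
  ∃ (piece : ℕ → Fin k) (c e : Fin k → ℤ),
    (∀ j, e j = 1 ∨ e j = -1) ∧ ∀ i ∈ I, f i = c (piece i) + e (piece i) * i

namespace IsPiecewiseUnitSlope

variable {f : ℕ → ℤ} {I J : Set ℕ} {k m : ℕ}

lemma of_eq_add_mul {c e : ℤ} (he : e = 1 ∨ e = -1) (hf : ∀ i ∈ I, f i = c + e * i) :
    IsPiecewiseUnitSlope f I 1 :=
  ⟨fun _ => 0, fun _ => c, fun _ => e, fun _ => he, hf⟩

lemma mono (h : IsPiecewiseUnitSlope f I k) (hJ : J ⊆ I) (hk : k ≤ m) :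
    IsPiecewiseUnitSlope f J m := by
  obtain ⟨piece, c, e, he, hf⟩ := h
  refine ⟨fun i => Fin.castLE hk (piece i), fun j => if h : j.1 < k then c ⟨j, h⟩ else 0,
    fun j => if h : j.1 < k then e ⟨j, h⟩ else 1, fun j => ?_, fun i hi => ?_⟩
  · dsimp only
    split_ifs
    exacts [he _, Or.inl rfl]
  · simpa using hf i (hJ hi)

lemma union (h₁ : IsPiecewiseUnitSlope f I k) (h₂ : IsPiecewiseUnitSlope f J m) :
    IsPiecewiseUnitSlope f (I ∪ J) (k + m) := by
  classical
  obtain ⟨piece₁, c₁, e₁, he₁, hf₁⟩ := h₁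
  obtain ⟨piece₂, c₂, e₂, he₂, hf₂⟩ := h₂
  refine ⟨fun i => if i ∈ I then Fin.castAdd m (piece₁ i) else Fin.natAdd k (piece₂ i),
    Fin.append c₁ c₂, Fin.append e₁ e₂,
    Fin.addCases (by simpa using he₁) (by simpa using he₂), fun i hi => ?_⟩
  by_cases hI : i ∈ I
  · simpa [hI] using hf₁ i hI
  · simpa [hI] using hf₂ i (hi.resolve_left hI)

lemma of_eq_min {a b : ℤ} (hf : ∀ i ∈ I, f i = min (a + i) (b - i)) :
    IsPiecewiseUnitSlope f I 2 := by
  have h₁ : IsPiecewiseUnitSlope f {i ∈ I | a + i ≤ b - i} 1 :=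
    of_eq_add_mul (Or.inl rfl) fun i hi => by rw [hf i hi.1, min_eq_left hi.2, one_mul]
  have h₂ : IsPiecewiseUnitSlope f {i ∈ I | b - i < a + i} 1 :=
    of_eq_add_mul (Or.inr rfl) fun i hi => by rw [hf i hi.1, min_eq_right hi.2.le]; ring
  refine (h₁.union h₂).mono (fun i hi => ?_) le_rfl
  rcases le_or_gt (a + i) (b - i) with h | h
  exacts [Or.inl ⟨hi, h⟩, Or.inr ⟨hi, h⟩]

end IsPiecewiseUnitSlope

lemma exists_add_or_sub_const_of_unit_slopes {α : Type*} {S : Set α} {a b : α → ℤ}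
    {c c' e e' : ℤ} (he : e = 1 ∨ e = -1) (he' : e' = 1 ∨ e' = -1)
    (h : ∀ p ∈ S, c + e * a p = c' + e' * b p) :
    (∃ d, ∀ p ∈ S, a p + b p = d) ∨ (∃ d, ∀ p ∈ S, a p - b p = d) := by
  rcases he with rfl | rfl <;> rcases he' with rfl | rfl
  · exact Or.inr ⟨c' - c, fun p hp => by linarith [h p hp]⟩
  · exact Or.inl ⟨c' - c, fun p hp => by linarith [h p hp]⟩
  · exact Or.inl ⟨c - c', fun p hp => by linarith [h p hp]⟩
  · exact Or.inr ⟨c - c', fun p hp => by linarith [h p hp]⟩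

namespace SimpleGraph

variable {G : SimpleGraph V}

/-- `x 0, …, x n` are the vertices of a branch-like walk of `G`, listed by position. -/
structure IsCorridor (G : SimpleGraph V) (x : ℕ → V) (n : ℕ) : Prop where
  adj : ∀ i < n, G.Adj (x i) (x (i + 1))
  ncard_neighborSet : ∀ i, i + 2 ≤ n → (G.neighborSet (x (i + 1))).ncard = 2
  ne_add_two : ∀ i, i + 2 ≤ n → x i ≠ x (i + 2)
  eq_of_lt : ∀ i j, i < j → j ≤ n → x i = x j → i = 0 ∧ j = n

namespace IsCorridor

variable {x : ℕ → V} {n : ℕ}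

lemma take (hx : G.IsCorridor x n) {k : ℕ} (hk : k ≤ n) : G.IsCorridor x k where
  adj i hi := hx.adj i (by omega)
  ncard_neighborSet i hi := hx.ncard_neighborSet i (by omega)
  ne_add_two i hi := hx.ne_add_two i (by omega)
  eq_of_lt i j hij hj h := by have := hx.eq_of_lt i j hij (by omega) h; omega

lemma drop (hx : G.IsCorridor x n) (k : ℕ) : G.IsCorridor (fun i => x (k + i)) (n - k) where
  adj i hi := hx.adj (k + i) (by omega)
  ncard_neighborSet i hi := hx.ncard_neighborSet (k + i) (by omega)
  ne_add_two i hi := hx.ne_add_two (k + i) (by omega)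
  eq_of_lt i j hij hj h := by have := hx.eq_of_lt (k + i) (k + j) (by omega) (by omega) h; omega

lemma apply_ne (hx : G.IsCorridor x n) {i j : ℕ} (hij : i < j) (hj : j ≤ n)
    (h : 0 < i ∨ j < n) : x i ≠ x j := by
  intro hxij
  have := hx.eq_of_lt i j hij hj hxij
  omega

lemma neighborSet_eq (hx : G.IsCorridor x n) {i : ℕ} (hi : i + 2 ≤ n) :
    G.neighborSet (x (i + 1)) = {x i, x (i + 2)} := by
  have hcard := hx.ncard_neighborSet i hi
  refine (Set.eq_of_subset_of_ncard_le ?_ ?_ (Set.finite_of_ncard_pos (by omega))).symm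
  · rintro _ (rfl | rfl)
    exacts [(hx.adj i (by omega)).symm, hx.adj (i + 1) (by omega)]
  · rw [hcard, Set.ncard_pair (hx.ne_add_two i hi)]

lemma dist_le (hx : G.IsCorridor x n) (hG : G.Connected) {i j : ℕ} (hij : i ≤ j)
    (hj : j ≤ n) : G.dist (x i) (x j) ≤ j - i := by
  induction j, hij using Nat.le_induction with
  | base => simp
  | succ j hij ih =>
    have := hG.dist_triangle (u := x i) (v := x j) (w := x (j + 1))
    rw [dist_eq_one_iff_adj.2 (hx.adj j (by omega))] at this
    have := ih (by omega)
    omega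

/-- A walk leaving the corridor at an inner vertex must first run along it to an end. -/
lemma min_le_length (hx : G.IsCorridor x n) {y : V} (hy : ∀ j, 0 < j → j < n → x j ≠ y)
    {w : V} (P : G.Walk w y) {i : ℕ} (hi : i ≤ n) (hw : x i = w) :
    min (i + G.dist (x 0) y) (n - i + G.dist (x n) y) ≤ P.length := by
  induction P generalizing i with
  | nil =>
    subst hw
    rcases Nat.eq_zero_or_pos i with rfl | hi₀
    · simp
    obtain rfl : i = n := by by_contra h; exact hy i hi₀ (by omega) rfl
    simp
  | @cons w b y hwb P ih =>
    have hP : G.dist (x i) y ≤ (Walk.cons hwb P).length := by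
      rw [hw]
      exact SimpleGraph.dist_le _
    rcases Nat.eq_zero_or_pos i with rfl | hi₀
    · omega
    rcases hi.eq_or_lt with rfl | hin
    · omega
    obtain ⟨j, rfl⟩ : ∃ j, i = j + 1 := ⟨i - 1, by omega⟩
    have hb : b ∈ G.neighborSet (x (j + 1)) := hw ▸ hwb
    rw [hx.neighborSet_eq (by omega)] at hb
    rw [Walk.length_cons]
    rcases hb with hb | hb
    · have := ih hy (i := j) (by omega) hb.symm
      omega
    · have := ih hy (i := j + 2) (by omega) (Set.mem_singleton_iff.1 hb).symm
      omega

theorem dist_eq_min (hx : G.IsCorridor x n) (hG : G.Connected) {y : V}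
    (hy : ∀ j, 0 < j → j < n → x j ≠ y) {i : ℕ} (hi : i ≤ n) :
    G.dist (x i) y = min (i + G.dist (x 0) y) (n - i + G.dist (x n) y) := by
  refine le_antisymm (le_min ?_ ?_) ?_
  · have := hG.dist_triangle (u := x i) (v := x 0) (w := y)
    have := hx.dist_le hG (Nat.zero_le i) hi
    rw [dist_comm] at this
    omega
  · have := hG.dist_triangle (u := x i) (v := x n) (w := y)
    have := hx.dist_le hG hi le_rfl
    omega
  · obtain ⟨P, hP⟩ := hG.exists_walk_length_eq_dist (x i) y
    exact hP ▸ hx.min_le_length hy P hi rfl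

/-- Both ends cannot be closer to `x k` through the other end: with `d = G.dist (x 0) (x n)`
that would need `n - k + d < k` and `k + d < n - k`. -/
lemma dist_zero_eq_or_dist_eq_sub (hx : G.IsCorridor x n) (hG : G.Connected) {k : ℕ}
    (hk : k ≤ n) : G.dist (x 0) (x k) = k ∨ G.dist (x n) (x k) = n - k := by
  have hstart : G.dist (x 0) (x k) = min k (n - k + G.dist (x 0) (x n)) := by
    rw [dist_comm, dist_comm (u := x 0)]
    simpa using hx.dist_eq_min hG (fun j h₀ hj => (hx.apply_ne h₀ hj.le (.inr hj)).symm) hk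
  have hend : G.dist (x n) (x k) = min (k + G.dist (x 0) (x n)) (n - k) := by
    rw [dist_comm]
    simpa using hx.dist_eq_min hG (fun j h₀ hj => hx.apply_ne hj le_rfl (.inl h₀)) hk
  omega

lemma isPiecewiseUnitSlope_dist_of_inner (hx : G.IsCorridor x n) (hG : G.Connected) {k : ℕ}
    (hk₀ : 0 < k) (hkn : k < n) :
    IsPiecewiseUnitSlope (fun i => (G.dist (x k) (x i) : ℤ)) (Set.Iic n) 3 := by
  have hleft : ∀ i ≤ k, G.dist (x k) (x i) = min (i + G.dist (x 0) (x k)) (k - i) := by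
    intro i hi
    rw [dist_comm]
    simpa using (hx.take hkn.le).dist_eq_min hG
      (fun j h₀ hj => hx.apply_ne hj hkn.le (.inl h₀)) hi
  have hright : ∀ i, k ≤ i → i ≤ n →
      G.dist (x k) (x i) = min (i - k) (n - i + G.dist (x n) (x k)) := by
    intro i hki hi
    have := (hx.drop k).dist_eq_min hG (y := x k) (i := i - k)
      (fun j h₀ hj => (hx.apply_ne (by omega) (by omega) (.inl hk₀)).symm) (by omega)
    simp only [Nat.add_sub_cancel' hki, add_zero, Nat.add_sub_cancel' hkn.le, dist_self] at this
    rw [dist_comm]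
    omega
  have hIic : Set.Iic n ⊆ Set.Iic k ∪ Set.Icc k n :=
    fun i hi => (le_total i k).imp id fun h => ⟨h, hi⟩
  rcases hx.dist_zero_eq_or_dist_eq_sub hG hkn.le with h | h
  · have h₁ : IsPiecewiseUnitSlope (fun i => (G.dist (x k) (x i) : ℤ)) (Set.Iic k) 1 :=
      .of_eq_add_mul (c := k) (.inr rfl) fun i (hi : i ≤ k) => by rw [hleft i hi]; omega
    have h₂ : IsPiecewiseUnitSlope (fun i => (G.dist (x k) (x i) : ℤ)) (Set.Icc k n) 2 :=
      .of_eq_min (a := -k) (b := n + G.dist (x n) (x k)) fun i (hi : k ≤ i ∧ i ≤ n) => by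
        rw [hright i hi.1 hi.2]; omega
    exact (h₁.union h₂).mono hIic le_rfl
  · have h₁ : IsPiecewiseUnitSlope (fun i => (G.dist (x k) (x i) : ℤ)) (Set.Iic k) 2 :=
      .of_eq_min (a := G.dist (x 0) (x k)) (b := k) fun i (hi : i ≤ k) => by
        rw [hleft i hi]; omega
    have h₂ : IsPiecewiseUnitSlope (fun i => (G.dist (x k) (x i) : ℤ)) (Set.Icc k n) 1 :=
      .of_eq_add_mul (c := -k) (.inl rfl) fun i (hi : k ≤ i ∧ i ≤ n) => by
        rw [hright i hi.1 hi.2]; omega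
    exact (h₁.union h₂).mono hIic le_rfl

theorem isPiecewiseUnitSlope_dist (hx : G.IsCorridor x n) (hG : G.Connected) (s : V) :
    IsPiecewiseUnitSlope (fun i => (G.dist s (x i) : ℤ)) (Set.Iic n) 3 := by
  by_cases hs : ∃ k, 0 < k ∧ k < n ∧ x k = s
  swap
  · push Not at hs
    refine (IsPiecewiseUnitSlope.of_eq_min (a := G.dist (x 0) s) (b := n + G.dist (x n) s)
      fun i (hi : i ≤ n) => ?_).mono le_rfl (by norm_num)
    rw [dist_comm, hx.dist_eq_min hG hs hi]
    omega
  obtain ⟨k, hk₀, hkn, rfl⟩ := hs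
  exact hx.isPiecewiseUnitSlope_dist_of_inner hG hk₀ hkn

end IsCorridor

end SimpleGraph

lemma IsBranchLike.isCorridor {G : SimpleGraph V} {u v : V} {W : G.Walk u v}
    (hW : IsBranchLike G W) : G.IsCorridor W.getVert W.length := by
  obtain ⟨hpc, hdeg⟩ := hW
  have heq_of_lt : ∀ i j, i < j → j ≤ W.length → W.getVert i = W.getVert j →
      i = 0 ∧ j = W.length := by
    intro i j hij hj h
    rcases hpc with hp | ⟨rfl, hc⟩
    · have := hp.getVert_injOn (show i ≤ W.length by omega) (show j ≤ W.length from hj) h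
      omega
    · rw [Walk.copy_rfl_rfl] at hc
      rcases Nat.eq_zero_or_pos i with rfl | hi
      · rw [Walk.getVert_zero, eq_comm, hc.getVert_endpoint_iff hj] at h
        omega
      · have := hc.getVert_injOn (show 1 ≤ i ∧ i ≤ W.length by omega) ⟨by omega, hj⟩ h
        omega
  refine ⟨fun i hi => W.adj_getVert_succ hi, fun i hi => ?_, fun i hi h => ?_, heq_of_lt⟩
  · refine hdeg _ (W.getVert_mem_support _) (fun h => ?_) (fun h => ?_)
    · have := heq_of_lt 0 (i + 1) (by omega) (by omega) (by rw [h, Walk.getVert_zero])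
      omega
    · have := heq_of_lt (i + 1) W.length (by omega) le_rfl (by rw [h, Walk.getVert_length])
      omega
  · obtain ⟨rfl, hlen⟩ := heq_of_lt i (i + 2) (by omega) hi h
    rcases hpc with hp | ⟨rfl, hc⟩
    · have := hp.getVert_injOn (show 0 ≤ W.length by omega) (show 2 ≤ W.length by omega) h
      omega
    · have := hc.three_le_length
      rw [Walk.length_copy] at this
      omega

lemma SimpleGraph.Walk.idxOf_support_le_length [DecidableEq V] {G : SimpleGraph V} {u v w : V}
    {W : G.Walk u v} (hw : w ∈ W.support) : W.support.idxOf w ≤ W.length := by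
  have := List.idxOf_lt_length_of_mem hw
  rw [W.length_support] at this
  omega

theorem indistinctSet_nine_diagonals_general (V : Type) [DecidableEq V]
    (G : SimpleGraph V) (hG : G.Connected) (a₁ a₂ b₁ b₂ : V)
    (A : G.Walk a₁ a₂) (B : G.Walk b₁ b₂)
    (hA : IsBranch G A) (hB : IsBranch G B) (s : V) :
    ∃ S : Fin 9 → Set (V × V),
      indistinctSet G s A B ⊆ ⋃ i, S i ∧
      ∀ i : Fin 9,
        (∃ c : ℤ, ∀ p ∈ S i,
          (A.support.idxOf p.1 : ℤ) + (B.support.idxOf p.2 : ℤ) = c) ∨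
        (∃ c : ℤ, ∀ p ∈ S i,
          (A.support.idxOf p.1 : ℤ) - (B.support.idxOf p.2 : ℤ) = c) := by
  obtain ⟨pieceA, cA, eA, heA, hfA⟩ := hA.1.isCorridor.isPiecewiseUnitSlope_dist hG s
  obtain ⟨pieceB, cB, eB, heB, hfB⟩ := hB.1.isCorridor.isPiecewiseUnitSlope_dist hG s
  let piece (p : V × V) : Fin 3 × Fin 3 :=
    (pieceA (A.support.idxOf p.1), pieceB (B.support.idxOf p.2))
  let e : Fin 3 × Fin 3 ≃ Fin 9 := finProdFinEquiv
  refine ⟨fun m => {p ∈ indistinctSet G s A B | piece p = e.symm m},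
    fun p hp => Set.mem_iUnion.2 ⟨e (piece p), hp, by simp⟩, fun m => ?_⟩
  refine exists_add_or_sub_const_of_unit_slopes (c := cA (e.symm m).1) (c' := cB (e.symm m).2)
    (heA (e.symm m).1) (heB (e.symm m).2) ?_
  rintro p ⟨⟨hp₁, hp₂, -, hdist⟩, hm⟩
  have hposA := hfA _ (Walk.idxOf_support_le_length hp₁)
  have hposB := hfB _ (Walk.idxOf_support_le_length hp₂)
  simp only [Walk.getVert_support_idxOf _ hp₁] at hposA
  simp only [Walk.getVert_support_idxOf _ hp₂] at hposB
  simp only [piece, Prod.ext_iff] at hm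
  rw [← hm.1, ← hm.2, ← hposA, ← hposB, hdist]

/-- The indistinct set for `s`, `A`, `B` is contained in the union of at most
nine sets, each of which lies on a line of slope `+1` or `-1` in the coordinates
given by positions along the two branches. -/
theorem indistinctSet_nine_diagonals (V : Type) [Fintype V] [DecidableEq V]
    (G : SimpleGraph V) (hG : G.Connected) (a₁ a₂ b₁ b₂ : V)
    (A : G.Walk a₁ a₂) (B : G.Walk b₁ b₂)
    (hA : IsBranch G A) (hB : IsBranch G B) (s : V) :
    ∃ S : Fin 9 → Set (V × V),
      indistinctSet G s A B ⊆ ⋃ i, S i ∧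
      ∀ i : Fin 9,
        (∃ c : ℤ, ∀ p ∈ S i,
          (A.support.idxOf p.1 : ℤ) + (B.support.idxOf p.2 : ℤ) = c) ∨
        (∃ c : ℤ, ∀ p ∈ S i,
          (A.support.idxOf p.1 : ℤ) - (B.support.idxOf p.2 : ℤ) = c) :=
  indistinctSet_nine_diagonals_general V G hG a₁ a₂ b₁ b₂ A B hA hB s
end

section
/- Let G be a connected finite graph, let C be a branch of G that is a path with endpoints p and q, let s be an interior vertex of C, and let v be a vertex of G that is not a vertex of C. Then d(s,v) = min(d_C(s,p) + d(p,v), d_C(s,q) + d(q,v)), where d denotes shortest-path distance in G and d_C denotes distance measured along the path C. -/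
open SimpleGraph

variable {V : Type*}

namespace SimpleGraph.Walk

variable {G : SimpleGraph V} {u w v : V} {W : G.Walk u w}

lemma IsPath.neighborSet_getVert_of_ncard_eq_two (hW : W.IsPath) {i : ℕ} (hi₀ : 0 < i)
    (hi : i < W.length) (hdeg : (G.neighborSet (W.getVert i)).ncard = 2) :
    G.neighborSet (W.getVert i) = {W.getVert (i - 1), W.getVert (i + 1)} := by
  have hpred : G.Adj (W.getVert i) (W.getVert (i - 1)) := by
    simpa [Nat.sub_add_cancel hi₀] using (W.adj_getVert_succ (i := i - 1) (by omega)).symm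
  have hne : W.getVert (i - 1) ≠ W.getVert (i + 1) := fun h => by
    have := hW.getVert_injOn (by simp; omega) (by simp; omega) h
    omega
  refine (Set.eq_of_subset_of_ncard_le ?_ ?_ (Set.finite_of_ncard_ne_zero (by omega))).symm
  · rintro x (rfl | rfl)
    exacts [hpred, W.adj_getVert_succ hi]
  · rw [hdeg, Set.ncard_pair hne]

lemma _root_.IsBranchLike.ncard_neighborSet_getVert (hB : IsBranchLike G W) (hW : W.IsPath)
    {i : ℕ} (hi₀ : 0 < i) (hi : i < W.length) : (G.neighborSet (W.getVert i)).ncard = 2 :=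
  hB.2 _ (W.getVert_mem_support i) (by rw [Ne, hW.getVert_eq_start_iff hi.le]; omega)
    (by rw [Ne, hW.getVert_eq_end_iff hi.le]; omega)

/-- A walk leaving a path whose interior vertices have degree two can only move along the path
until it reaches one of the two ends. -/
lemma IsPath.min_add_dist_le_length (hW : W.IsPath)
    (hdeg : ∀ i, 0 < i → i < W.length → (G.neighborSet (W.getVert i)).ncard = 2)
    (hv : v ∉ W.support) {x : V} (R : G.Walk x v) {i : ℕ} (hi : i ≤ W.length)
    (hx : W.getVert i = x) :
    min (i + G.dist u v) (W.length - i + G.dist w v) ≤ R.length := by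
  induction R generalizing i with
  | nil => exact absurd (hx ▸ W.getVert_mem_support i) hv
  | @cons x y _ hadj R ih =>
    subst hx
    by_cases hi₀ : i = 0
    · subst hi₀
      have := dist_le (cons hadj R |>.copy W.getVert_zero rfl)
      simp only [length_copy] at this
      omega
    by_cases hil : i = W.length
    · subst hil
      have := dist_le (cons hadj R |>.copy W.getVert_length rfl)
      simp only [length_copy] at this
      omega
    have hy : y ∈ G.neighborSet (W.getVert i) := hadj
    rw [hW.neighborSet_getVert_of_ncard_eq_two (by omega) (by omega)
      (hdeg i (by omega) (by omega))] at hy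
    rcases hy with rfl | rfl
    · have := ih hv (i := i - 1) (by omega) rfl
      simp only [length_cons]
      omega
    · have := ih hv (i := i + 1) (by omega) rfl
      simp only [length_cons]
      omega

end SimpleGraph.Walk

/-- Here `d_C(s,p)` is the index of `s` in `W.support`. -/
theorem dist_from_branch_interior_general (V : Type) [DecidableEq V]
    (G : SimpleGraph V) (hG : G.Connected) (p q : V) (W : G.Walk p q)
    (hW : IsBranch G W) (hpath : W.IsPath) (s : V)
    (hs : s ∈ W.support)
    (v : V) (hv : v ∉ W.support) :
    G.dist s v =
      min (W.support.idxOf s + G.dist p v)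
        ((W.length - W.support.idxOf s) + G.dist q v) := by
  have hdist_sp : G.dist s p ≤ W.support.idxOf s := by
    rw [dist_comm, ← W.length_takeUntil hs]
    exact dist_le _
  have hdist_sq : G.dist s q ≤ W.length - W.support.idxOf s := by
    rw [← W.length_dropUntil hs]
    exact dist_le _
  refine le_antisymm (le_min ?_ ?_) ?_
  · have := hG.dist_triangle (u := s) (v := p) (w := v)
    omega
  · have := hG.dist_triangle (u := s) (v := q) (w := v)
    omega
  · obtain ⟨R, hR⟩ := hG.exists_walk_length_eq_dist s v
    rw [← hR]
    exact hpath.min_add_dist_le_length (fun i => hW.1.ncard_neighborSet_getVert hpath) hv R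
      (W.length_takeUntil hs ▸ W.length_takeUntil_le_length hs) (W.getVert_support_idxOf hs)

/-- For a path branch `C` of `G` with endpoints `p`, `q`, an interior vertex `s`
of `C`, and a vertex `v` of `G` not on `C`,
`d(s,v) = min (d_C(s,p) + d(p,v)) (d_C(s,q) + d(q,v))`,
where the position of `s` along `C` (its index in the support of `C`, i.e. its
distance from `p` along `C`) gives `d_C(s,p)`. -/
theorem dist_from_branch_interior (V : Type) [Fintype V] [DecidableEq V]
    (G : SimpleGraph V) (hG : G.Connected) (p q : V) (W : G.Walk p q)
    (hW : IsBranch G W) (hpath : W.IsPath) (s : V)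
    (hs : s ∈ W.support) (hsp : s ≠ p) (hsq : s ≠ q)
    (v : V) (hv : v ∉ W.support) :
    G.dist s v =
      min (W.support.idxOf s + G.dist p v)
        ((W.length - W.support.idxOf s) + G.dist q v) :=
  dist_from_branch_interior_general V G hG p q W hW hpath s hs v hv
end

section
/- Let G be a connected finite graph, let C be a branch of G that is a path with endpoints p and q, and let v be a fixed vertex of G not on C. Then, as a function of the position x of a vertex s along C (so that d_C(s,p) = x and d_C(s,q) = L − x where L is the length of C), the shortest-path distance d(s,v) in G is a piecewise linear function of x with at most one breakpoint; that is, there exists a threshold x₀ such that d(s,v) = x + d(p,v) for x ≤ x₀ and d(s,v) = (L − x) + d(q,v) for x ≥ x₀. -/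
open SimpleGraph

variable {V : Type*}

/-!
An internal vertex of the path `W` has degree two, so its only neighbours are its two
neighbours along `W`. Hence a walk from a vertex `s` of `W` to a vertex `v` off `W` has to run
along `W` to one of its ends before leaving it, and
`d(s, v) = min (x + d(p, v)) ((L - x) + d(q, v))` where `x` is the position of `s`.
The two affine functions of `x` cross at `x₀ = (L + d(q, v) - d(p, v)) / 2`.
-/

namespace SimpleGraph.Walk

variable {G : SimpleGraph V} {p q v : V} {W : G.Walk p q}

lemma idxOf_support_le_length_s15 [DecidableEq V] {s : V} (hs : s ∈ W.support) :
    W.support.idxOf s ≤ W.length :=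
  W.length_takeUntil hs ▸ W.length_takeUntil_le_length hs

lemma IsPath.neighborSet_getVert (hW : W.IsPath) {j : ℕ} (hj₀ : 0 < j) (hj : j < W.length)
    (hdeg : (G.neighborSet (W.getVert j)).ncard = 2) :
    G.neighborSet (W.getVert j) = {W.getVert (j - 1), W.getVert (j + 1)} := by
  have hne : W.getVert (j - 1) ≠ W.getVert (j + 1) := fun h => by
    have := hW.getVert_injOn (by simp only [Set.mem_ofPred_eq]; omega)
      (by simp only [Set.mem_ofPred_eq]; omega) h
    omega
  have hprev : G.Adj (W.getVert j) (W.getVert (j - 1)) := by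
    simpa [Nat.sub_add_cancel hj₀] using (W.adj_getVert_succ (i := j - 1) (by omega)).symm
  have hsub : {W.getVert (j - 1), W.getVert (j + 1)} ⊆ G.neighborSet (W.getVert j) :=
    Set.insert_subset hprev (Set.singleton_subset_iff.2 (W.adj_getVert_succ hj))
  exact (Set.eq_of_subset_of_ncard_le hsub (by rw [hdeg, Set.ncard_pair hne])
    (Set.finite_of_ncard_pos (by omega))).symm

lemma IsPath.dist_add_le_length_or (hW : W.IsPath)
    (hdeg : ∀ x ∈ W.support, x ≠ p → x ≠ q → (G.neighborSet x).ncard = 2)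
    (hv : v ∉ W.support) {y : V} (P : G.Walk y v) {j : ℕ} (hj : j ≤ W.length)
    (hy : W.getVert j = y) :
    G.dist p v + j ≤ P.length ∨ G.dist q v + (W.length - j) ≤ P.length := by
  induction P generalizing j with
  | nil => exact absurd (hy ▸ W.getVert_mem_support j) hv
  | cons hadj P ih =>
    subst hy
    rw [length_cons]
    rcases Nat.eq_zero_or_pos j with rfl | hj₀
    · left
      simpa using dist_le (cons hadj P)
    rcases hj.eq_or_lt with rfl | hjL
    · right
      simpa using dist_le (cons hadj P)
    have ht : _ ∈ G.neighborSet (W.getVert j) := hadj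
    rw [hW.neighborSet_getVert hj₀ hjL (hdeg _ (W.getVert_mem_support j)
      ((hW.getVert_eq_start_iff hj).not.2 (by omega))
      ((hW.getVert_eq_end_iff hj).not.2 (by omega)))] at ht
    rcases ht with rfl | rfl
    · have := ih hv (j := j - 1) (by omega) rfl
      omega
    · have := ih hv (j := j + 1) (by omega) rfl
      omega

lemma IsPath.dist_eq_min [DecidableEq V] (hG : G.Connected) (hW : W.IsPath)
    (hdeg : ∀ x ∈ W.support, x ≠ p → x ≠ q → (G.neighborSet x).ncard = 2)
    (hv : v ∉ W.support) {s : V} (hs : s ∈ W.support) :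
    G.dist s v = min (W.support.idxOf s + G.dist p v)
      (W.length - W.support.idxOf s + G.dist q v) := by
  have hsp : G.dist s p ≤ W.support.idxOf s := by
    rw [dist_comm, ← W.length_takeUntil hs]
    exact dist_le _
  have hsq : G.dist s q ≤ W.length - W.support.idxOf s := by
    rw [← W.length_dropUntil hs]
    exact dist_le _
  obtain ⟨P, hP⟩ := hG.exists_walk_length_eq_dist s v
  have hlower := hW.dist_add_le_length_or hdeg hv P
    (W.idxOf_support_le_length_s15 hs) (W.getVert_support_idxOf hs)
  refine le_antisymm (le_min ?_ ?_) ?_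
  · linarith [hG.dist_triangle (u := s) (v := p) (w := v)]
  · linarith [hG.dist_triangle (u := s) (v := q) (w := v)]
  · omega

end SimpleGraph.Walk

theorem dist_from_branch_piecewise_linear_general (V : Type) [DecidableEq V]
    (G : SimpleGraph V) (hG : G.Connected) (p q : V) (W : G.Walk p q)
    (hW : IsBranch G W) (hpath : W.IsPath)
    (v : V) (hv : v ∉ W.support) :
    ∃ x₀ : ℝ, ∀ s ∈ W.support,
      ((W.support.idxOf s : ℝ) ≤ x₀ →
        G.dist s v = W.support.idxOf s + G.dist p v) ∧
      (x₀ ≤ (W.support.idxOf s : ℝ) →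
        G.dist s v = (W.length - W.support.idxOf s) + G.dist q v) := by
  refine ⟨((W.length : ℝ) + G.dist q v - G.dist p v) / 2, fun s hs => ?_⟩
  have hi := W.idxOf_support_le_length_s15 hs
  rw [hpath.dist_eq_min hG hW.1.2 hv hs]
  constructor <;> intro hx
  · apply min_eq_left
    rify [hi]
    linarith
  · apply min_eq_right
    rify [hi]
    linarith

/-- For a path branch `C` of `G` of length `L` with endpoints `p`, `q` and a
vertex `v` not on `C`, the distance from a vertex `s` of `C` at position `x`
along `C` to `v` is piecewise linear in `x` with at most one breakpoint: there
is a threshold `x₀` with `d(s,v) = x + d(p,v)` for `x ≤ x₀` and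
`d(s,v) = (L - x) + d(q,v)` for `x ≥ x₀`. -/
theorem dist_from_branch_piecewise_linear (V : Type) [Fintype V] [DecidableEq V]
    (G : SimpleGraph V) (hG : G.Connected) (p q : V) (W : G.Walk p q)
    (hW : IsBranch G W) (hpath : W.IsPath)
    (v : V) (hv : v ∉ W.support) :
    ∃ x₀ : ℝ, ∀ s ∈ W.support,
      ((W.support.idxOf s : ℝ) ≤ x₀ →
        G.dist s v = W.support.idxOf s + G.dist p v) ∧
      (x₀ ≤ (W.support.idxOf s : ℝ) →
        G.dist s v = (W.length - W.support.idxOf s) + G.dist q v) :=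
  dist_from_branch_piecewise_linear_general V G hG p q W hW hpath v hv
end
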